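/- Fix a real f ≠ 0 and set J₀ = (1 − e^{−f})/M₀(f), u₀(x) = w₀(f,x)/M₀(f), c₁ = M₁(f)/M₀(f)³ + J₀/2, and u₁(x) = (c₁/J₀)·u₀(x) − u₀(x)·∫₀ˣ u₀(s) ds − w₁(f,x)/(M₀(f)³·J₀). Then u₁ is continuously differentiable and satisfies: (i) (φ'(x) − f)·u₁(x) + u₁'(x) = −c₁ + J₀·∫₀ˣ u₀(s) ds for all x; (ii) u₁(x+1) = u₁(x) − u₀(x) for all x; (iii) ∫₀¹ u₁(x) dx = 0. Equivalently, the flux of u₁ satisfies −((φ'−f)u₁ + u₁') = M₁(f)/M₀(f)³ + J₀/2 − J₀·∫₀ˣ u₀(s) ds. -/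

import Mathlib

open MeasureTheory intervalIntegral Asymptotics Filter

noncomputable def w0 (φ : ℝ → ℝ) (f x : ℝ) : ℝ :=
  ∫ s in (0:ℝ)..1, Real.exp (φ (x + s) - φ x - f * s)

noncomputable def M0 (φ : ℝ → ℝ) (f : ℝ) : ℝ := ∫ x in (0:ℝ)..1, w0 φ f x

noncomputable def w1 (φ : ℝ → ℝ) (f x : ℝ) : ℝ :=
  ∫ s in (0:ℝ)..1, (w0 φ f (x + s)) ^ 2 * Real.exp (φ (x + s) - φ x - f * s)

noncomputable def M1 (φ : ℝ → ℝ) (f : ℝ) : ℝ := ∫ x in (0:ℝ)..1, w1 φ f x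


/-!
Both weights are values of the tilted transform
`T h x = ∫₀¹ h (x+s) e^{φ(x+s) - φ x - f s} ds = e^{f x - φ x} ∫ₓ^{x+1} h e^{φ - f·}`,
namely `w₀ = T 1` and `w₁ = T w₀²`. For 1-periodic `φ` and `h` the second form shows that
`T h` solves `(T h)' = (f - φ') T h + (e^{-f} - 1) h`. Since `e^{-f} - 1 = -J₀ M₀`, this reads
`u₀' = (f - φ') u₀ - J₀`, and in the derivative of `u₁` the `u₀²` coming from `u₀ ∫₀ˣ u₀`
cancels the one coming from `w₁`, which is (i). Periodicity of `w₀, w₁` and `∫ₓ^{x+1} u₀ = 1`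
give (ii), and `∫₀¹ u₀ ∫₀ˣ u₀ = (∫₀¹ u₀)² / 2 = 1/2` gives (iii) for the stated `c₁`.
-/

open Function Real

theorem hasDerivAt_integral_self_add {E : Type*} [NormedAddCommGroup E] [NormedSpace ℝ E]
    [CompleteSpace E] {g : ℝ → E} (hg : Continuous g) (c x : ℝ) :
    HasDerivAt (fun y => ∫ t in y..y + c, g t) (g (x + c) - g x) x := by
  have hdiff : (fun y => ∫ t in y..y + c, g t)
      = fun y => (∫ t in (0:ℝ)..y + c, g t) - ∫ t in (0:ℝ)..y, g t := by
    funext y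
    rw [integral_interval_sub_left (hg.intervalIntegrable _ _) (hg.intervalIntegrable _ _)]
  have hright : HasDerivAt (fun y => ∫ t in (0:ℝ)..y + c, g t) (g (x + c)) x := by
    simpa using (hg.integral_hasStrictDerivAt 0 (x + c)).hasDerivAt.comp_add_const x c
  rw [hdiff]
  exact hright.sub (hg.integral_hasStrictDerivAt 0 x).hasDerivAt

theorem integral_mul_integral_self {g : ℝ → ℝ} (hg : Continuous g) (a b : ℝ) :
    ∫ x in a..b, g x * ∫ t in a..x, g t = (∫ x in a..b, g x) ^ 2 / 2 := by
  have hprim : ∀ x, HasDerivAt (fun y => ∫ t in a..y, g t) (g x) x :=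
    fun x => (hg.integral_hasStrictDerivAt a x).hasDerivAt
  have hsq : ∀ x ∈ Set.uIcc a b, HasDerivAt (fun y => (∫ t in a..y, g t) ^ 2 / 2)
      (g x * ∫ t in a..x, g t) x := fun x _ =>
    (((hprim x).pow 2).div_const 2).congr_deriv (by ring)
  have hcont : Continuous fun x => g x * ∫ t in a..x, g t :=
    hg.mul (continuous_iff_continuousAt.2 fun x => (hprim x).continuousAt)
  rw [integral_eq_sub_of_hasDerivAt hsq (hcont.intervalIntegrable _ _), integral_same]
  ring

noncomputable def tiltedTransform (φ : ℝ → ℝ) (f : ℝ) (h : ℝ → ℝ) (x : ℝ) : ℝ :=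
  ∫ s in (0:ℝ)..1, h (x + s) * exp (φ (x + s) - φ x - f * s)

section TiltedTransform

variable {φ h : ℝ → ℝ} {f : ℝ}

theorem tiltedTransform_eq_exp_mul_integral (x : ℝ) :
    tiltedTransform φ f h x
      = exp (f * x - φ x) * ∫ t in x..x + 1, h t * exp (φ t - f * t) := by
  have hshift := integral_comp_add_left (a := 0) (b := 1)
    (fun t => exp (f * x - φ x) * (h t * exp (φ t - f * t))) x
  rw [add_zero] at hshift
  rw [← intervalIntegral.integral_const_mul, ← hshift]
  refine integral_congr fun s _ => ?_
  rw [mul_left_comm, ← exp_add]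
  ring_nf

theorem hasDerivAt_tiltedTransform (hφ : Differentiable ℝ φ) (hh : Continuous h) (x : ℝ) :
    HasDerivAt (tiltedTransform φ f h)
      ((f - deriv φ x) * tiltedTransform φ f h x
        + (h (x + 1) * exp (φ (x + 1) - φ x - f) - h x)) x := by
  have hexp : HasDerivAt (fun y => exp (f * y - φ y)) (exp (f * x - φ x) * (f - deriv φ x)) x :=
    (((hasDerivAt_id x).const_mul f).sub (hφ x).hasDerivAt).exp.congr_deriv (by simp)
  have hint := hasDerivAt_integral_self_add
    (g := fun t => h t * exp (φ t - f * t)) (by have := hφ.continuous; fun_prop) 1 x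
  rw [funext tiltedTransform_eq_exp_mul_integral]
  beta_reduce
  refine (hexp.mul hint).congr_deriv ?_
  have hcancel : exp (f * x - φ x) * exp (φ x - f * x) = 1 := by
    rw [← exp_add]
    simp
  have hshift :
      exp (f * x - φ x) * exp (φ (x + 1) - f * (x + 1)) = exp (φ (x + 1) - φ x - f) := by
    rw [← exp_add]
    ring_nf
  linear_combination h (x + 1) * hshift - h x * hcancel

theorem hasDerivAt_tiltedTransform_of_periodic (hφ : Differentiable ℝ φ) (hφper : Periodic φ 1)
    (hh : Continuous h) (hhper : Periodic h 1) (x : ℝ) :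
    HasDerivAt (tiltedTransform φ f h)
      ((f - deriv φ x) * tiltedTransform φ f h x + (exp (-f) - 1) * h x) x := by
  refine (hasDerivAt_tiltedTransform hφ hh x).congr_deriv ?_
  rw [hφper, hhper, sub_self, zero_sub]
  ring

theorem tiltedTransform_periodic (hφper : Periodic φ 1) (hhper : Periodic h 1) :
    Periodic (tiltedTransform φ f h) 1 := fun x => by
  refine integral_congr fun s _ => ?_
  simp only [add_right_comm x 1 s, hφper (x + s), hφper x, hhper (x + s)]

end TiltedTransform

theorem w0_eq_tiltedTransform (φ : ℝ → ℝ) (f : ℝ) : w0 φ f = tiltedTransform φ f 1 := by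
  funext x
  simp [w0, tiltedTransform]

theorem w1_eq_tiltedTransform (φ : ℝ → ℝ) (f : ℝ) :
    w1 φ f = tiltedTransform φ f (fun t => w0 φ f t ^ 2) := rfl

section Weights

variable {φ : ℝ → ℝ} {f : ℝ}

theorem hasDerivAt_w0 (hφ : Differentiable ℝ φ) (hφper : Periodic φ 1) (x : ℝ) :
    HasDerivAt (w0 φ f) ((f - deriv φ x) * w0 φ f x + (exp (-f) - 1)) x := by
  rw [w0_eq_tiltedTransform]
  simpa using hasDerivAt_tiltedTransform_of_periodic (h := 1) hφ hφper continuous_const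
    (fun _ => rfl) x

theorem continuous_w0 (hφ : Differentiable ℝ φ) (hφper : Periodic φ 1) : Continuous (w0 φ f) :=
  continuous_iff_continuousAt.2 fun x => (hasDerivAt_w0 hφ hφper x).continuousAt

theorem w0_periodic (hφper : Periodic φ 1) : Periodic (w0 φ f) 1 := by
  rw [w0_eq_tiltedTransform]
  exact tiltedTransform_periodic hφper fun _ => rfl

theorem w0_pos (hφ : Continuous φ) (x : ℝ) : 0 < w0 φ f x :=
  intervalIntegral_pos_of_pos_on (Continuous.intervalIntegrable (by fun_prop) _ _)
    (fun _ _ => exp_pos _) zero_lt_one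

theorem M0_pos (hφ : Differentiable ℝ φ) (hφper : Periodic φ 1) : 0 < M0 φ f :=
  intervalIntegral_pos_of_pos_on ((continuous_w0 hφ hφper).intervalIntegrable _ _)
    (fun x _ => w0_pos hφ.continuous x) zero_lt_one

theorem hasDerivAt_w1 (hφ : Differentiable ℝ φ) (hφper : Periodic φ 1) (x : ℝ) :
    HasDerivAt (w1 φ f) ((f - deriv φ x) * w1 φ f x + (exp (-f) - 1) * w0 φ f x ^ 2) x := by
  rw [w1_eq_tiltedTransform]
  exact hasDerivAt_tiltedTransform_of_periodic (h := fun t => w0 φ f t ^ 2) hφ hφper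
    ((continuous_w0 hφ hφper).pow 2) (fun t => congrArg (· ^ 2) (w0_periodic hφper t)) x

theorem continuous_w1 (hφ : Differentiable ℝ φ) (hφper : Periodic φ 1) : Continuous (w1 φ f) :=
  continuous_iff_continuousAt.2 fun x => (hasDerivAt_w1 hφ hφper x).continuousAt

theorem w1_periodic (hφper : Periodic φ 1) : Periodic (w1 φ f) 1 := by
  rw [w1_eq_tiltedTransform]
  exact tiltedTransform_periodic hφper fun t => congrArg (· ^ 2) (w0_periodic hφper t)

end Weights

section Corrector

variable {φ u0 u1 : ℝ → ℝ} {f J0 c1 : ℝ}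

theorem one_sub_exp_neg_div_M0_ne_zero (hφ : Differentiable ℝ φ) (hφper : Periodic φ 1)
    (hf : f ≠ 0) : (1 - exp (-f)) / M0 φ f ≠ 0 :=
  div_ne_zero (sub_ne_zero.2 fun h => hf (by simpa using h.symm)) (M0_pos hφ hφper).ne'

theorem continuous_u0 (hφ : Differentiable ℝ φ) (hφper : Periodic φ 1)
    (hu0 : ∀ x, u0 x = w0 φ f x / M0 φ f) : Continuous u0 := by
  rw [funext hu0]
  exact (continuous_w0 hφ hφper).div_const _

theorem u0_periodic (hφper : Periodic φ 1) (hu0 : ∀ x, u0 x = w0 φ f x / M0 φ f) :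
    Periodic u0 1 := fun x => by
  rw [hu0, hu0, w0_periodic hφper]

theorem integral_u0 (hφ : Differentiable ℝ φ) (hφper : Periodic φ 1)
    (hu0 : ∀ x, u0 x = w0 φ f x / M0 φ f) : ∫ x in (0:ℝ)..1, u0 x = 1 := by
  simp_rw [hu0, intervalIntegral.integral_div]
  exact div_self (M0_pos hφ hφper).ne'

theorem integral_u0_add_one (hφ : Differentiable ℝ φ) (hφper : Periodic φ 1)
    (hu0 : ∀ x, u0 x = w0 φ f x / M0 φ f) (x : ℝ) :
    ∫ s in (0:ℝ)..x + 1, u0 s = (∫ s in (0:ℝ)..x, u0 s) + 1 := by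
  rw [(u0_periodic hφper hu0).intervalIntegral_add_eq_add 0 x
    fun _ _ => (continuous_u0 hφ hφper hu0).intervalIntegrable _ _, zero_add,
    integral_u0 hφ hφper hu0]

theorem hasDerivAt_u0 (hφ : Differentiable ℝ φ) (hφper : Periodic φ 1)
    (hJ0 : J0 = (1 - exp (-f)) / M0 φ f) (hu0 : ∀ x, u0 x = w0 φ f x / M0 φ f) (x : ℝ) :
    HasDerivAt u0 ((f - deriv φ x) * u0 x - J0) x := by
  rw [funext hu0]
  refine ((hasDerivAt_w0 hφ hφper x).div_const _).congr_deriv ?_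
  rw [hJ0]
  ring

theorem hasDerivAt_u1 (hφ : Differentiable ℝ φ) (hφper : Periodic φ 1) (hf : f ≠ 0)
    (hJ0 : J0 = (1 - exp (-f)) / M0 φ f) (hu0 : ∀ x, u0 x = w0 φ f x / M0 φ f)
    (hu1 : ∀ x, u1 x = (c1 / J0) * u0 x - u0 x * (∫ s in (0:ℝ)..x, u0 s)
        - w1 φ f x / ((M0 φ f) ^ 3 * J0)) (x : ℝ) :
    HasDerivAt u1 ((f - deriv φ x) * u1 x - c1 + J0 * ∫ s in (0:ℝ)..x, u0 s) x := by
  have hM0 := (M0_pos (f := f) hφ hφper).ne'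
  have hJ0ne : J0 ≠ 0 := hJ0 ▸ one_sub_exp_neg_div_M0_ne_zero hφ hφper hf
  have hexp : exp (-f) - 1 = -(J0 * M0 φ f) := by
    rw [hJ0]
    field_simp
    ring
  have hu0' := hasDerivAt_u0 hφ hφper hJ0 hu0 x
  have hprim := ((continuous_u0 hφ hφper hu0).integral_hasStrictDerivAt 0 x).hasDerivAt
  rw [funext hu1]
  refine (((hu0'.const_mul (c1 / J0)).sub (hu0'.mul hprim)).sub
    ((hasDerivAt_w1 hφ hφper x).div_const _)).congr_deriv ?_
  beta_reduce
  rw [hexp, hu0 x]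
  field_simp
  ring

theorem u1_add_one (hφ : Differentiable ℝ φ) (hφper : Periodic φ 1)
    (hu0 : ∀ x, u0 x = w0 φ f x / M0 φ f)
    (hu1 : ∀ x, u1 x = (c1 / J0) * u0 x - u0 x * (∫ s in (0:ℝ)..x, u0 s)
        - w1 φ f x / ((M0 φ f) ^ 3 * J0)) (x : ℝ) :
    u1 (x + 1) = u1 x - u0 x := by
  rw [hu1, hu1, integral_u0_add_one hφ hφper hu0, u0_periodic hφper hu0, w1_periodic hφper]
  ring

theorem integral_u1 (hφ : Differentiable ℝ φ) (hφper : Periodic φ 1) (hf : f ≠ 0)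
    (hJ0 : J0 = (1 - exp (-f)) / M0 φ f) (hu0 : ∀ x, u0 x = w0 φ f x / M0 φ f)
    (hc1 : c1 = M1 φ f / (M0 φ f) ^ 3 + J0 / 2)
    (hu1 : ∀ x, u1 x = (c1 / J0) * u0 x - u0 x * (∫ s in (0:ℝ)..x, u0 s)
        - w1 φ f x / ((M0 φ f) ^ 3 * J0)) :
    ∫ x in (0:ℝ)..1, u1 x = 0 := by
  have hM0 := (M0_pos (f := f) hφ hφper).ne'
  have hJ0ne : J0 ≠ 0 := hJ0 ▸ one_sub_exp_neg_div_M0_ne_zero hφ hφper hf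
  have hu0c := continuous_u0 hφ hφper hu0
  have hprim : Continuous fun x => ∫ s in (0:ℝ)..x, u0 s :=
    continuous_primitive (fun _ _ => hu0c.intervalIntegrable _ _) 0
  have hw1c := continuous_w1 (f := f) hφ hφper
  simp_rw [hu1]
  rw [intervalIntegral.integral_sub, intervalIntegral.integral_sub,
    intervalIntegral.integral_const_mul, intervalIntegral.integral_div, integral_mul_integral_self hu0c, integral_u0 hφ hφper hu0]
  · rw [show ∫ x in (0:ℝ)..1, w1 φ f x = M1 φ f from rfl, hc1]
    field_simp
    ring
  all_goals exact Continuous.intervalIntegrable (by fun_prop) _ _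

end Corrector

theorem stmt_4 (φ : ℝ → ℝ) (hφ : ContDiff ℝ 1 φ) (hφper : ∀ x, φ (x + 1) = φ x)
    (f : ℝ) (hf : f ≠ 0)
    (J0 c1 : ℝ) (u0 u1 : ℝ → ℝ)
    (hJ0 : J0 = (1 - Real.exp (-f)) / M0 φ f)
    (hu0 : ∀ x, u0 x = w0 φ f x / M0 φ f)
    (hc1 : c1 = M1 φ f / (M0 φ f) ^ 3 + J0 / 2)
    (hu1 : ∀ x, u1 x = (c1 / J0) * u0 x - u0 x * (∫ s in (0:ℝ)..x, u0 s)
        - w1 φ f x / ((M0 φ f) ^ 3 * J0)) :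
    ContDiff ℝ 1 u1 ∧
    (∀ x, (deriv φ x - f) * u1 x + deriv u1 x
        = -c1 + J0 * ∫ s in (0:ℝ)..x, u0 s) ∧
    (∀ x, u1 (x + 1) = u1 x - u0 x) ∧
    (∫ x in (0:ℝ)..1, u1 x) = 0 ∧
    (∀ x, -((deriv φ x - f) * u1 x + deriv u1 x)
        = M1 φ f / (M0 φ f) ^ 3 + J0 / 2 - J0 * ∫ s in (0:ℝ)..x, u0 s) := by
  have hφd : Differentiable ℝ φ := hφ.differentiable one_ne_zero
  have hu1' := hasDerivAt_u1 hφd hφper hf hJ0 hu0 hu1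
  have hode : ∀ x, (deriv φ x - f) * u1 x + deriv u1 x = -c1 + J0 * ∫ s in (0:ℝ)..x, u0 s :=
    fun x => by
      rw [(hu1' x).deriv]
      ring
  refine ⟨?_, hode, u1_add_one hφd hφper hu0 hu1, integral_u1 hφd hφper hf hJ0 hu0 hc1 hu1,
    fun x => by rw [hode, hc1]; ring⟩
  have hu1d : Differentiable ℝ u1 := fun x => (hu1' x).differentiableAt
  refine contDiff_one_iff_deriv.2 ⟨hu1d, ?_⟩
  rw [funext fun x => (hu1' x).deriv]
  have hφ' := hφ.continuous_deriv le_rfl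
  have hu1c := hu1d.continuous
  have hprim := continuous_primitive (μ := volume)
    (fun _ _ => (continuous_u0 hφd hφper hu0).intervalIntegrable _ _) 0
  fun_prop
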